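/- arXiv:2011.02139 — 2 statements merged into one kernel-verified Lean document; each statement's English description precedes it below -/
import Mathlib

section
/- Let n ≥ 2 be even, let ρ = (n−1, n−2, ..., 1, 0) ∈ ℝ^n, and let v ∈ {−1,+1}^n be a vector with an even number of coordinates equal to −1. Suppose that the multiset {|v_i + ρ_i| : 1 ≤ i ≤ n} equals the multiset {n−1, n−2, ..., 1, 0}. Then v is the alternating vector (−1,1,−1,1,...,−1,1) if n/2 is even, and v = (−1,1,...,−1,−1) (alternating except the last coordinate is −1) if n/2 is odd. -/
/-!
Write `f i = |v i + ρ i|`. The multiset hypothesis says that `f` permutes `{0, …, n-1}`; in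
particular `f` is injective there and `f 0 ≠ n`. For `i < n - 1` we have `f i = n - i` if
`v i = 1` and `f i = n - 2 - i` if `v i = -1`, so `v i = -1, v (i + 2) = 1` would give
`f i = f (i + 2)`. Hence along each parity class a `-1` is followed only by `-1`'s. The even
class starts with `v 0 = -1` (as `f 0 ≠ n`). In the odd class a `-1` before the last index
would propagate to `v (n - 3) = -1`, making `f (n - 3) = 1 = |v (n - 1)| = f (n - 1)`. So `v` is
alternating on the first `n - 1` coordinates, which contain `n / 2` entries `-1`, and the parity
of the number of `-1`'s decides `v (n - 1)`.
-/

open Finset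

def absAddRho (n : ℕ) (v : ℕ → ℤ) (i : ℕ) : ℤ := |v i + ((n : ℤ) - 1 - (i : ℤ))|

section PermutesRange

variable {n : ℕ} {f : ℕ → ℤ}

theorem injOn_of_map_range_eq_map_cast
    (h : (range n).val.map f = (range n).val.map ((↑) : ℕ → ℤ)) :
    Set.InjOn f (range n) := by
  have hnodup : ((range n).val.map f).Nodup := by
    rw [h]
    exact (range n).nodup.map Nat.cast_injective
  intro i hi j hj hij
  exact (Multiset.nodup_map_iff_inj_on (range n).nodup).mp hnodup i hi j hj hij

theorem lt_of_map_range_eq_map_cast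
    (h : (range n).val.map f = (range n).val.map ((↑) : ℕ → ℤ)) {i : ℕ} (hi : i < n) :
    f i < n := by
  have hmem : f i ∈ (range n).val.map ((↑) : ℕ → ℤ) :=
    h ▸ Multiset.mem_map_of_mem f (mem_range.mpr hi)
  obtain ⟨j, hj, hji⟩ := Multiset.mem_map.mp hmem
  rw [← hji]
  exact_mod_cast mem_range.mp hj

end PermutesRange

theorem card_filter_even_range (m : ℕ) : #{i ∈ range m | Even i} = (m + 1) / 2 := by
  induction m with
  | zero => simp
  | succ m ih =>
    rw [range_add_one, filter_insert]
    split_ifs with h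
    · rw [card_insert_of_notMem (by simp), ih]
      have := Nat.even_iff.mp h
      omega
    · rw [ih]
      have := Nat.not_even_iff.mp h
      omega

section Alternating

variable {n : ℕ} {v : ℕ → ℤ}

theorem absAddRho_of_eq_one {i : ℕ} (hi : i < n) (h : v i = 1) :
    absAddRho n v i = n - i := by
  rw [absAddRho, h, abs_of_nonneg (by omega)]
  ring

theorem absAddRho_of_eq_neg_one {i : ℕ} (hi : i + 1 < n) (h : v i = -1) :
    absAddRho n v i = n - 2 - i := by
  rw [absAddRho, h, abs_of_nonneg (by omega)]
  ring

theorem absAddRho_last (hn : 0 < n) (h : v (n - 1) = 1 ∨ v (n - 1) = -1) :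
    absAddRho n v (n - 1) = 1 := by
  rcases h with h | h <;> simp [absAddRho, h, Nat.cast_sub hn]

theorem eq_neg_one_add_two (hval : ∀ i < n, v i = 1 ∨ v i = -1)
    (hinj : Set.InjOn (absAddRho n v) (range n)) {i : ℕ} (hi : i + 2 < n) (h : v i = -1) :
    v (i + 2) = -1 := by
  refine (hval (i + 2) hi).resolve_left fun h2 => ?_
  have hcollide : absAddRho n v i = absAddRho n v (i + 2) := by
    rw [absAddRho_of_eq_neg_one (by omega) h, absAddRho_of_eq_one hi h2]
    push_cast
    ring
  have := hinj (mem_range.mpr (by omega)) (mem_range.mpr hi) hcollide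
  omega

theorem eq_neg_one_add_two_mul (hval : ∀ i < n, v i = 1 ∨ v i = -1)
    (hinj : Set.InjOn (absAddRho n v) (range n)) {i : ℕ} (h : v i = -1) :
    ∀ k, i + 2 * k < n → v (i + 2 * k) = -1
  | 0, _ => h
  | k + 1, hk => eq_neg_one_add_two hval hinj hk
      (eq_neg_one_add_two_mul hval hinj h k (by omega))

theorem eq_neg_one_of_even (hval : ∀ i < n, v i = 1 ∨ v i = -1)
    (hinj : Set.InjOn (absAddRho n v) (range n)) (hlt : ∀ i < n, absAddRho n v i < n)
    {i : ℕ} (hi : i < n) (he : Even i) : v i = -1 := by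
  have hv0 : v 0 = -1 := by
    refine (hval 0 (by omega)).resolve_left fun h => ?_
    have := hlt 0 (by omega)
    rw [absAddRho_of_eq_one (by omega) h] at this
    simp at this
  have := eq_neg_one_add_two_mul hval hinj hv0 (i / 2) (by omega)
  rwa [zero_add, Nat.two_mul_div_two_of_even he] at this

theorem eq_one_of_odd (hne : Even n) (hval : ∀ i < n, v i = 1 ∨ v i = -1)
    (hinj : Set.InjOn (absAddRho n v) (range n)) {i : ℕ} (hi : i + 1 < n) (ho : Odd i) :
    v i = 1 := by
  obtain ⟨m, rfl⟩ := hne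
  obtain ⟨l, rfl⟩ := ho
  refine (hval _ (by omega)).resolve_right fun h => ?_
  have hpen : v (m + m - 3) = -1 := by
    have := eq_neg_one_add_two_mul hval hinj h (m - l - 2) (by omega)
    rwa [show 2 * l + 1 + 2 * (m - l - 2) = m + m - 3 by omega] at this
  have hcollide : absAddRho (m + m) v (m + m - 3) = absAddRho (m + m) v (m + m - 1) := by
    rw [absAddRho_of_eq_neg_one (by omega) hpen, absAddRho_last (by omega) (hval _ (by omega)),
      Nat.cast_sub (by omega)]
    push_cast
    ring
  have := hinj (mem_range.mpr (by omega)) (mem_range.mpr (by omega)) hcollide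
  omega

theorem eq_alternating (hne : Even n) (hval : ∀ i < n, v i = 1 ∨ v i = -1)
    (hinj : Set.InjOn (absAddRho n v) (range n)) (hlt : ∀ i < n, absAddRho n v i < n)
    {i : ℕ} (hi : i + 1 < n) : v i = if i % 2 = 0 then -1 else 1 := by
  split_ifs with h
  · exact eq_neg_one_of_even hval hinj hlt (by omega) (Nat.even_iff.mpr h)
  · exact eq_one_of_odd hne hval hinj hi (Nat.odd_iff.mpr (by omega))

theorem card_filter_eq_neg_one (hpos : 0 < n)
    (halt : ∀ i, i + 1 < n → v i = if i % 2 = 0 then -1 else 1) :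
    #{i ∈ range n | v i = -1} = n / 2 + if v (n - 1) = -1 then 1 else 0 := by
  obtain ⟨m, rfl⟩ := Nat.exists_eq_add_of_le' hpos
  have hinit : #{i ∈ range m | v i = -1} = #{i ∈ range m | Even i} := by
    refine congrArg card (filter_congr fun i hi => ?_)
    rw [halt i (by simpa using hi), Nat.even_iff]
    split_ifs <;> simp_all
  rw [range_add_one, filter_insert, Nat.add_sub_cancel]
  split_ifs with h
  · rw [card_insert_of_notMem (by simp), hinit, card_filter_even_range]
  · rw [hinit, card_filter_even_range, add_zero]

theorem eq_neg_one_last_iff (hpos : 0 < n) (hval : ∀ i < n, v i = 1 ∨ v i = -1)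
    (halt : ∀ i, i + 1 < n → v i = if i % 2 = 0 then -1 else 1)
    (hpar : Even #{i ∈ range n | v i = -1}) :
    v (n - 1) = -1 ↔ ¬ Even (n / 2) := by
  rw [card_filter_eq_neg_one hpos halt] at hpar
  rcases hval (n - 1) (by omega) with h | h <;> simp_all [Nat.even_add_one]

end Alternating

theorem stmt_13_general (n : ℕ) (hne : Even n) (v : ℕ → ℤ)
    (hval : ∀ i < n, v i = 1 ∨ v i = -1)
    (hpar : Even (((Finset.range n).filter (fun i => v i = -1)).card))
    (hmult : Multiset.map (fun i => |v i + ((n : ℤ) - 1 - (i : ℤ))|) (Finset.range n).val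
      = Multiset.map (fun j => (j : ℤ)) (Finset.range n).val) :
    (Even (n / 2) → ∀ i < n, v i = if i % 2 = 0 then -1 else 1) ∧
    (¬ Even (n / 2) →
      ∀ i < n, v i = if i = n - 1 then -1 else if i % 2 = 0 then -1 else 1) := by
  rcases Nat.eq_zero_or_pos n with rfl | hpos
  · simp
  -- the right-hand side of `hmult` casts `range n` through the `Multiset` monad
  have hperm : (range n).val.map (absAddRho n v) = (range n).val.map ((↑) : ℕ → ℤ) := by
    simp only [Multiset.pure_def, Multiset.bind_def, Multiset.bind_singleton, Multiset.map_id']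
      at hmult
    exact hmult
  have halt : ∀ i, i + 1 < n → v i = if i % 2 = 0 then -1 else 1 := fun i =>
    eq_alternating hne hval (injOn_of_map_range_eq_map_cast hperm)
      (fun i => lt_of_map_range_eq_map_cast hperm)
  have hlast := eq_neg_one_last_iff hpos hval halt hpar
  have hlast_odd : (n - 1) % 2 = 1 := by have := Nat.even_iff.mp hne; omega
  refine ⟨fun h i hi => ?_, fun h i hi => ?_⟩
  · rcases (show i + 1 < n ∨ i = n - 1 by omega) with hi | rfl
    · exact halt i hi
    · rw [if_neg (by omega)]
      exact (hval _ hi).resolve_right (mt hlast.mp (not_not.mpr h))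
  · rcases (show i + 1 < n ∨ i = n - 1 by omega) with hi | rfl
    · rw [if_neg (by omega)]
      exact halt i hi
    · rw [if_pos rfl]
      exact hlast.mpr h

/-- Lemma 4.1: let `n ≥ 2` be even, `ρ = (n-1,...,1,0)`, and `v ∈ {±1}^n` with an even
number of `-1`'s.  If the multiset `{|v_i + ρ_i|}` equals `{0,1,...,n-1}`, then `v` is the
alternating vector `(-1,1,...,-1,1)` when `n/2` is even, and `(-1,1,...,-1,-1)` (alternating
except the last coordinate is `-1`) when `n/2` is odd. -/
theorem stmt_13 (n : ℕ) (hn : 2 ≤ n) (hne : Even n) (v : ℕ → ℤ)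
    (hval : ∀ i < n, v i = 1 ∨ v i = -1)
    (hpar : Even (((Finset.range n).filter (fun i => v i = -1)).card))
    (hmult : Multiset.map (fun i => |v i + ((n : ℤ) - 1 - (i : ℤ))|) (Finset.range n).val
      = Multiset.map (fun j => (j : ℤ)) (Finset.range n).val) :
    (Even (n / 2) → ∀ i < n, v i = if i % 2 = 0 then -1 else 1) ∧
    (¬ Even (n / 2) →
      ∀ i < n, v i = if i = n - 1 then -1 else if i % 2 = 0 then -1 else 1) :=
  stmt_13_general n hne v hval hpar hmult
end

section
/- Define integers A_h^{k,n} for integers h, k, n by: A_h^{k,n} = 0 if h > k or h ≤ 0; A_k^{k,n} = 1; and A_h^{k,n} = −∑_{i=h+1}^{k} (−1)^{i−h} Θ(n,i,h) A_i^{k,n} otherwise, where Θ(n,i,h) = N(n−2h, i−h) with N(m,j) = (m/j)·C(m−j−1,j−1) for j ≥ 1 and N(m,0) = 1. Then for all h > 1 and k > 1 with 2k < n: A_h^{k,n} = A_{h−1}^{k−1,n−2}. -/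
/-- `N(m,j) = (m/j) C(m-j-1,j-1)` for `j ≥ 1`, `N(m,0) = 1`. -/
noncomputable def Ncount (m j : ℕ) : ℚ :=
  if j = 0 then 1 else ((m : ℚ) / (j : ℚ)) * (Nat.choose (m - j - 1) (j - 1) : ℚ)

/-- `Θ(n,k,h) = N(n-2h, k-h)`. -/
noncomputable def Theta (n k h : ℕ) : ℚ := Ncount (n - 2 * h) (k - h)

/-- The coefficients `A_h^{k,n}`: `A_h^{k,n} = 0` if `h > k` or `h ≤ 0`, `A_k^{k,n} = 1`,
and otherwise `A_h^{k,n} = -∑_{i=h+1}^k (-1)^{i-h} Θ(n,i,h) A_i^{k,n}`. -/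
noncomputable def Acoeff (k n h : ℕ) : ℚ :=
  if h = 0 ∨ k < h then 0
  else if h = k then 1
  else -∑ i ∈ (Finset.Ioc h k).attach,
    (-1 : ℚ) ^ ((i : ℕ) - h) * Theta n (i : ℕ) h * Acoeff k n (i : ℕ)
termination_by k - h
decreasing_by
  have hi := i.2
  rw [Finset.mem_Ioc] at hi
  omega


/- Θ(n,i,h) only depends on (n - 2h, i - h), so shifting h, k by one and n by two maps the
recursion defining `A^{k,n}` term by term onto the recursion defining `A^{k-1,n-2}`. -/

theorem Theta_succ_succ (n i h : ℕ) : Theta n (i + 1) (h + 1) = Theta (n - 2) i h := by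
  simp only [Theta, Nat.add_sub_add_right]
  congr 1
  omega

theorem Acoeff_eq_zero_of_lt {k h : ℕ} (n : ℕ) (hkh : k < h) : Acoeff k n h = 0 := by
  rw [Acoeff, if_pos (Or.inr hkh)]

theorem Acoeff_self {k : ℕ} (n : ℕ) (hk : k ≠ 0) : Acoeff k n k = 1 := by
  rw [Acoeff, if_neg (by omega), if_pos rfl]

theorem Acoeff_of_lt {k h : ℕ} (n : ℕ) (hh : h ≠ 0) (hhk : h < k) :
    Acoeff k n h = -∑ i ∈ Finset.Ioc h k, (-1 : ℚ) ^ (i - h) * Theta n i h * Acoeff k n i := by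
  rw [Acoeff, if_neg (by omega), if_neg hhk.ne,
    Finset.sum_attach _ fun i => (-1 : ℚ) ^ (i - h) * Theta n i h * Acoeff k n i]

theorem Acoeff_succ_succ {k h : ℕ} (n : ℕ) (hh : h ≠ 0) :
    Acoeff (k + 1) n (h + 1) = Acoeff k (n - 2) h := by
  rcases lt_trichotomy k h with hkh | rfl | hhk
  · rw [Acoeff_eq_zero_of_lt n (by omega), Acoeff_eq_zero_of_lt (n - 2) hkh]
  · rw [Acoeff_self n (by omega), Acoeff_self (n - 2) hh]
  · rw [Acoeff_of_lt n (by omega) (by omega), Acoeff_of_lt (n - 2) hh hhk,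
      ← Finset.map_add_right_Ioc h k 1, Finset.sum_map]
    refine congrArg Neg.neg (Finset.sum_congr rfl fun i hi => ?_)
    have hhi := (Finset.mem_Ioc.1 hi).1
    rw [addRightEmbedding_apply, Nat.add_sub_add_right, Theta_succ_succ,
      Acoeff_succ_succ n (by omega)]
termination_by k - h
decreasing_by have := Finset.mem_Ioc.1 hi; omega

theorem stmt_16_general (h k n : ℕ) (hh : 1 < h) :
    Acoeff k n h = Acoeff (k - 1) (n - 2) (h - 1) := by
  obtain ⟨h, rfl⟩ : ∃ h', h = h' + 1 := ⟨h - 1, by omega⟩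
  rcases k with _ | k
  · rw [Acoeff_eq_zero_of_lt n (by omega), Acoeff_eq_zero_of_lt (n - 2) (by omega)]
  · exact Acoeff_succ_succ n (by omega)

/-- Property (1) of Lemma 5.1: `A_h^{k,n} = A_{h-1}^{k-1,n-2}` for `h > 1`, `k > 1`, `2k < n`. -/
theorem stmt_16 (h k n : ℕ) (hh : 1 < h) (hk : 1 < k) (hn : 2 * k < n) :
    Acoeff k n h = Acoeff (k - 1) (n - 2) (h - 1) :=
  stmt_16_general h k n hh
end
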